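/- arXiv:1207.0935 — 2 statements merged into one kernel-verified Lean document; each statement's English description precedes it below -/
import Mathlib

section
/- The Two-Extremes mechanism, which on input x = (x_1,...,x_n) outputs the pair (min x, max x), is group strategyproof: for any instance x, any coalition S of agents, and any joint misreport y_S, some agent in S does not strictly decrease her cost. -/
/-!
An agent reporting an extreme location already has cost zero, so a coalition containing one
cannot make all its members strictly better off. Otherwise both extreme reports survive the
misreport, hence the new leftmost facility is no further right and the new rightmost one no
further left; every agent lies between the old extremes, so both facilities only move away
from her.
-/

noncomputable section

/-- Cost of an agent at location `a` under a pair of facilities. -/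
def fcost (a : ℝ) (y : ℝ × ℝ) : ℝ := min |a - y.1| |a - y.2|

/-- Social cost: sum of the agents' distances to their nearest facility. -/
def scost {n : ℕ} (x : Fin n → ℝ) (y : ℝ × ℝ) : ℝ := ∑ i, fcost (x i) y

/-- Optimal social cost over all placements of two facilities. -/
def optCost {n : ℕ} (x : Fin n → ℝ) : ℝ := ⨅ y : ℝ × ℝ, scost x y

/-- The mechanism outputs its facilities in increasing order. -/
def Ordered {n : ℕ} (F : (Fin n → ℝ) → ℝ × ℝ) : Prop := ∀ x, (F x).1 ≤ (F x).2

/-- No agent can strictly decrease her cost by misreporting her location. -/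
def Strategyproof {n : ℕ} (F : (Fin n → ℝ) → ℝ × ℝ) : Prop :=
  ∀ (x : Fin n → ℝ) (i : Fin n) (y : ℝ),
    fcost (x i) (F x) ≤ fcost (x i) (F (Function.update x i y))

/-- `F` has approximation ratio (at most) `ρ` for the social cost. -/
def ApproxRatio {n : ℕ} (F : (Fin n → ℝ) → ℝ × ℝ) (ρ : ℝ) : Prop :=
  ∀ x, scost x (F x) ≤ ρ * optCost x

/-- An `(i|j,k)`-well-separated 3-agent instance. -/
def WellSep (ρ : ℝ) (x : Fin 3 → ℝ) (i j k : Fin 3) : Prop :=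
  x i < x j ∧ x j < x k ∧ ρ * (x k - x j) < x j - x i

/-- The Two-Extremes mechanism: place the facilities at the leftmost and the
rightmost reported location. -/
def TwoExtremes (n : ℕ) : (Fin n → ℝ) → ℝ × ℝ :=
  fun x => (sInf (Set.range x), sSup (Set.range x))

lemma fcost_nonneg (a : ℝ) (p : ℝ × ℝ) : 0 ≤ fcost a p :=
  le_min (abs_nonneg _) (abs_nonneg _)

lemma fcost_eq_zero_of_eq_fst {a : ℝ} {p : ℝ × ℝ} (h : a = p.1) : fcost a p = 0 :=
  le_antisymm ((min_le_left _ _).trans_eq (by rw [h, sub_self, abs_zero])) (fcost_nonneg a p)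

lemma fcost_eq_zero_of_eq_snd {a : ℝ} {p : ℝ × ℝ} (h : a = p.2) : fcost a p = 0 :=
  le_antisymm ((min_le_right _ _).trans_eq (by rw [h, sub_self, abs_zero])) (fcost_nonneg a p)

lemma fcost_le_fcost_of_le_of_le {z : ℝ} {p q : ℝ × ℝ} (hq₁ : q.1 ≤ p.1) (hp₁ : p.1 ≤ z)
    (hp₂ : z ≤ p.2) (hq₂ : p.2 ≤ q.2) : fcost z p ≤ fcost z q := by
  refine min_le_min ?_ ?_
  · rw [abs_of_nonneg (by linarith), abs_of_nonneg (by linarith)]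
    linarith
  · rw [abs_of_nonpos (by linarith), abs_of_nonpos (by linarith)]
    linarith

lemma twoExtremes_fst_le {n : ℕ} (x : Fin n → ℝ) (i : Fin n) : (TwoExtremes n x).1 ≤ x i :=
  csInf_le (Set.finite_range x).bddBelow ⟨i, rfl⟩

lemma le_twoExtremes_snd {n : ℕ} (x : Fin n → ℝ) (i : Fin n) : x i ≤ (TwoExtremes n x).2 :=
  le_csSup (Set.finite_range x).bddAbove ⟨i, rfl⟩

lemma exists_apply_eq_twoExtremes_fst {n : ℕ} [Nonempty (Fin n)] (x : Fin n → ℝ) :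
    ∃ l, x l = (TwoExtremes n x).1 :=
  (Set.range_nonempty x).csInf_mem (Set.finite_range x)

lemma exists_apply_eq_twoExtremes_snd {n : ℕ} [Nonempty (Fin n)] (x : Fin n → ℝ) :
    ∃ r, x r = (TwoExtremes n x).2 :=
  (Set.range_nonempty x).csSup_mem (Set.finite_range x)

/-- The Two-Extremes mechanism is group strategyproof: for any coalition `S`
and any joint misreport `y`, some agent of `S` does not strictly decrease
her cost. -/
theorem twoExtremes_group_strategyproof (n : ℕ) (x : Fin n → ℝ)
    (S : Finset (Fin n)) (hS : S.Nonempty) (y : Fin n → ℝ) :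
    ∃ i ∈ S, fcost (x i) (TwoExtremes n x) ≤
      fcost (x i) (TwoExtremes n (fun t => if t ∈ S then y t else x t)) := by
  obtain ⟨i, hi⟩ := hS
  have : Nonempty (Fin n) := ⟨i⟩
  obtain ⟨l, hl⟩ := exists_apply_eq_twoExtremes_fst x
  obtain ⟨r, hr⟩ := exists_apply_eq_twoExtremes_snd x
  by_cases hlS : l ∈ S
  · exact ⟨l, hlS, (fcost_eq_zero_of_eq_fst hl).trans_le (fcost_nonneg _ _)⟩
  by_cases hrS : r ∈ S
  · exact ⟨r, hrS, (fcost_eq_zero_of_eq_snd hr).trans_le (fcost_nonneg _ _)⟩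
  set x' : Fin n → ℝ := fun t => if t ∈ S then y t else x t
  have hl' : x' l = x l := if_neg hlS
  have hr' : x' r = x r := if_neg hrS
  refine ⟨i, hi, fcost_le_fcost_of_le_of_le ?_ (twoExtremes_fst_le x i)
    (le_twoExtremes_snd x i) ?_⟩
  · exact hl ▸ hl' ▸ twoExtremes_fst_le x' l
  · exact hr ▸ hr' ▸ le_twoExtremes_snd x' r
end
end

section
/- Let F be a strategyproof 2-facility mechanism on the line with bounded approximation ratio ρ for 3-agent instances. Suppose that for every (i|j,k)-well-separated instance z with z_i = a, F_2(z) ∈ {z_j, z_k}, and that there exists an (i|j,k)-well-separated instance x with x_i = a and F_2(x) = x_k. Then for every (i|j,k)-well-separated instance x' with x'_i = a and x_k < x'_k, F_2(x') = x'_k. -/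
noncomputable section

/-!
The well-separated instances with `x i = a` form a convex, hence preconnected, set on which
`F₂ ∈ {x j, x k}`, so it suffices that `F₂ = x k` and `F₂ = x j` cannot occur at arbitrarily
close instances `u`, `v`. Let `m` take agent `j` from `u` and agent `k` from `v`. If
`F₂ m = m j`, agent `k` at `m` pays at least `m k - m j` but can report `u k` and obtain `u`, whose
facility sits at `u k`. If `F₂ m = m k`, the approximation ratio puts `F₁ m` within
`ρ (m k - m j)` of `a`, so agent `j` at `m` pays at least the margin of `m`, but can report `v j`
and obtain `v`. Either way `dist u v` is at least the margin of `m`, which stays bounded away from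
`0` near a well-separated instance.
-/

open Function Filter Topology Set

section General

variable {n : ℕ} {F : (Fin n → ℝ) → ℝ × ℝ} {ρ : ℝ}

lemma fcost_nonneg_s13 (c : ℝ) (y : ℝ × ℝ) : 0 ≤ fcost c y :=
  le_min (abs_nonneg _) (abs_nonneg _)

lemma fcost_le_abs_sub_snd (c : ℝ) (y : ℝ × ℝ) : fcost c y ≤ |c - y.2| :=
  min_le_right _ _

lemma sub_snd_le_fcost {c : ℝ} {y : ℝ × ℝ} (h₁ : y.1 ≤ y.2) (h₂ : y.2 ≤ c) :
    c - y.2 ≤ fcost c y :=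
  le_min (by rw [abs_of_nonneg (by linarith)]; linarith) (by rw [abs_of_nonneg (by linarith)])

lemma optCost_le_scost (x : Fin n → ℝ) (y : ℝ × ℝ) : optCost x ≤ scost x y :=
  ciInf_le ⟨0, by rintro r ⟨y', rfl⟩; exact Finset.sum_nonneg fun m _ => fcost_nonneg_s13 _ _⟩ y

lemma ApproxRatio.fcost_le_mul_scost (happ : ApproxRatio F ρ) (hρ : 0 ≤ ρ)
    (x : Fin n → ℝ) (m : Fin n) (y : ℝ × ℝ) : fcost (x m) (F x) ≤ ρ * scost x y :=
  calc fcost (x m) (F x) ≤ scost x (F x) :=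
        Finset.single_le_sum (fun m _ => fcost_nonneg_s13 (x m) (F x)) (Finset.mem_univ m)
    _ ≤ ρ * optCost x := happ x
    _ ≤ ρ * scost x y := mul_le_mul_of_nonneg_left (optCost_le_scost x y) hρ

lemma Strategyproof.fcost_le_of_snd_eq (hsp : Strategyproof F) (x : Fin n → ℝ) (m : Fin n)
    (y : ℝ) (h : (F (update x m y)).2 = y) : fcost (x m) (F x) ≤ |x m - y| :=
  (hsp x m y).trans ((fcost_le_abs_sub_snd _ _).trans_eq (by rw [h]))

end General

section ThreeAgents

variable {F : (Fin 3 → ℝ) → ℝ × ℝ} {ρ : ℝ} {i j k : Fin 3} {a : ℝ}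

lemma fin3_eq_or_eq_or_eq : ∀ {i j k : Fin 3}, i ≠ j → i ≠ k → j ≠ k →
    ∀ m, m = i ∨ m = j ∨ m = k := by
  decide

lemma fin3_univ_eq : ∀ {i j k : Fin 3}, i ≠ j → i ≠ k → j ≠ k →
    (Finset.univ : Finset (Fin 3)) = {i, j, k} := by
  decide

lemma scost_fin3 (hij : i ≠ j) (hik : i ≠ k) (hjk : j ≠ k) (x : Fin 3 → ℝ) (y : ℝ × ℝ) :
    scost x y = fcost (x i) y + fcost (x j) y + fcost (x k) y := by
  rw [scost, fin3_univ_eq hij hik hjk, Finset.sum_insert (by simp [hij, hik]),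
    Finset.sum_insert (by simp [hjk]), Finset.sum_singleton, add_assoc]

lemma update_eq_update_fin3 (hij : i ≠ j) (hik : i ≠ k) (hjk : j ≠ k) {p q : Fin 3 → ℝ}
    (h : p i = q i) : update q j (p j) = update p k (q k) := by
  funext m
  rcases fin3_eq_or_eq_or_eq hij hik hjk m with rfl | rfl | rfl <;>
    simp [hij, hik, hjk, hjk.symm, h]

lemma scost_le_of_le (hij : i ≠ j) (hik : i ≠ k) (hjk : j ≠ k) {x : Fin 3 → ℝ}
    (h : x j ≤ x k) : scost x (x i, x k) ≤ x k - x j := by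
  have hi : fcost (x i) (x i, x k) = 0 := le_antisymm (by simp [fcost]) (fcost_nonneg_s13 _ _)
  have hj : fcost (x j) (x i, x k) ≤ x k - x j :=
    (fcost_le_abs_sub_snd _ _).trans_eq (by rw [abs_of_nonpos (by simpa using h)]; ring)
  have hk : fcost (x k) (x i, x k) = 0 := le_antisymm (by simp [fcost]) (fcost_nonneg_s13 _ _)
  rw [scost_fin3 hij hik hjk]
  linarith

def wsMargin (ρ : ℝ) (x : Fin 3 → ℝ) (i j k : Fin 3) : ℝ :=
  min (x k - x j) ((x j - x i) - ρ * (x k - x j))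

lemma wellSep_iff_wsMargin_pos (hρ : 0 ≤ ρ) {x : Fin 3 → ℝ} :
    WellSep ρ x i j k ↔ 0 < wsMargin ρ x i j k := by
  simp only [WellSep, wsMargin, lt_min_iff, sub_pos]
  constructor
  · rintro ⟨-, h₂, h₃⟩
    exact ⟨h₂, h₃⟩
  · rintro ⟨h₂, h₃⟩
    exact ⟨by nlinarith, h₂, h₃⟩

lemma continuous_wsMargin : Continuous fun x : Fin 3 → ℝ => wsMargin ρ x i j k := by
  unfold wsMargin
  fun_prop

lemma ApproxRatio.abs_sub_fst_le (happ : ApproxRatio F ρ) (hρ : 0 ≤ ρ)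
    (hij : i ≠ j) (hik : i ≠ k) (hjk : j ≠ k) {x : Fin 3 → ℝ} (hws : WellSep ρ x i j k)
    (h : (F x).2 = x k) : |(F x).1 - x i| ≤ ρ * (x k - x j) := by
  obtain ⟨h₁, h₂, h₃⟩ := hws
  have hcost : fcost (x i) (F x) ≤ ρ * (x k - x j) :=
    (happ.fcost_le_mul_scost hρ x i (x i, x k)).trans
      (mul_le_mul_of_nonneg_left (scost_le_of_le hij hik hjk h₂.le) hρ)
  have hfar : ρ * (x k - x j) < |x i - (F x).2| := by
    rw [h, abs_of_neg (by linarith)]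
    linarith
  rw [fcost, min_def, abs_sub_comm (x i)] at hcost
  split_ifs at hcost <;> linarith

lemma ApproxRatio.wsMargin_le_fcost (happ : ApproxRatio F ρ) (hρ : 0 ≤ ρ)
    (hij : i ≠ j) (hik : i ≠ k) (hjk : j ≠ k) {x : Fin 3 → ℝ} (hws : WellSep ρ x i j k)
    (h : (F x).2 = x k) : wsMargin ρ x i j k ≤ fcost (x j) (F x) := by
  have hnear := happ.abs_sub_fst_le hρ hij hik hjk hws h
  obtain ⟨h₁, h₂, -⟩ := hws
  refine le_min ?_ ?_
  · have := abs_sub_le (x j) (F x).1 (x i)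
    rw [abs_of_pos (by linarith : 0 < x j - x i)] at this
    exact (min_le_right _ _).trans (by linarith)
  · rw [h, abs_of_neg (by linarith), neg_sub]
    exact min_le_left _ _

def wellSepFiber (ρ : ℝ) (i j k : Fin 3) (a : ℝ) : Set (Fin 3 → ℝ) :=
  {z | z i = a ∧ WellSep ρ z i j k}

lemma convex_wellSepFiber : Convex ℝ (wellSepFiber ρ i j k a) := by
  rintro p ⟨hpa, hp₁, hp₂, hp₃⟩ q ⟨hqa, hq₁, hq₂, hq₃⟩ α β hα hβ hαβ
  simp only [wellSepFiber, WellSep, mem_ofPred_eq, Pi.add_apply, Pi.smul_apply, smul_eq_mul]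
  have pos {u v : ℝ} (hu : 0 < u) (hv : 0 < v) : 0 < α * u + β * v :=
    convex_Ioi (𝕜 := ℝ) (0 : ℝ) hu hv hα hβ hαβ
  refine ⟨by rw [hpa, hqa, ← add_mul, hαβ, one_mul], ?_, ?_, ?_⟩
  · linear_combination pos (sub_pos.2 hp₁) (sub_pos.2 hq₁)
  · linear_combination pos (sub_pos.2 hp₂) (sub_pos.2 hq₂)
  · linear_combination pos (sub_pos.2 hp₃) (sub_pos.2 hq₃)

lemma wsMargin_le_dist (hρ : 0 ≤ ρ) (hord : Ordered F) (hsp : Strategyproof F)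
    (happ : ApproxRatio F ρ) (hij : i ≠ j) (hik : i ≠ k) (hjk : j ≠ k)
    (hall : ∀ z ∈ wellSepFiber ρ i j k a, (F z).2 = z j ∨ (F z).2 = z k)
    {u v : Fin 3 → ℝ} (hua : u i = a) (hv : v ∈ wellSepFiber ρ i j k a)
    (huk : (F u).2 = u k) (hvk : (F v).2 ≠ v k) (hm : WellSep ρ (update v j (u j)) i j k) :
    wsMargin ρ (update v j (u j)) i j k ≤ dist u v := by
  set m := update v j (u j) with hm_def
  have hvj : (F v).2 = v j := (hall v hv).resolve_right hvk
  have hma : m i = a := by rw [hm_def, update_of_ne hij]; exact hv.1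
  rcases hall m ⟨hma, hm⟩ with hmF | hmF
  · have hdev : update m k (u k) = u := by
      rw [hm_def, update_eq_update_fin3 hij hik hjk (hua.trans hv.1.symm), update_idem,
        update_eq_self]
    calc wsMargin ρ m i j k ≤ m k - m j := min_le_left _ _
      _ = m k - (F m).2 := by rw [hmF]
      _ ≤ fcost (m k) (F m) := sub_snd_le_fcost (hord m) (hmF ▸ hm.2.1.le)
      _ ≤ |m k - u k| := hsp.fcost_le_of_snd_eq m k (u k) (by rw [hdev]; exact huk)
      _ = dist (v k) (u k) := by rw [hm_def, update_of_ne hjk.symm, Real.dist_eq]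
      _ ≤ dist u v := dist_comm u v ▸ dist_le_pi_dist v u k
  · have hdev : update m j (v j) = v := by rw [hm_def, update_idem, update_eq_self]
    calc wsMargin ρ m i j k ≤ fcost (m j) (F m) := happ.wsMargin_le_fcost hρ hij hik hjk hm hmF
      _ ≤ |m j - v j| := hsp.fcost_le_of_snd_eq m j (v j) (by rw [hdev]; exact hvj)
      _ = dist (u j) (v j) := by rw [hm_def, update_self, Real.dist_eq]
      _ ≤ dist u v := dist_le_pi_dist u v j

lemma eventually_snd_eq_iff (hρ : 0 ≤ ρ) (hord : Ordered F) (hsp : Strategyproof F)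
    (happ : ApproxRatio F ρ) (hij : i ≠ j) (hik : i ≠ k) (hjk : j ≠ k)
    (hall : ∀ z ∈ wellSepFiber ρ i j k a, (F z).2 = z j ∨ (F z).2 = z k)
    {p : Fin 3 → ℝ} (hp : p ∈ wellSepFiber ρ i j k a) :
    ∀ᶠ q in 𝓝[wellSepFiber ρ i j k a] p, ((F p).2 = p k ↔ (F q).2 = q k) := by
  set ε := wsMargin ρ p i j k
  have hε : 0 < ε := (wellSep_iff_wsMargin_pos hρ).1 hp.2
  have hW : {z | ε / 2 < wsMargin ρ z i j k} ∈ 𝓝 p :=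
    (isOpen_lt continuous_const continuous_wsMargin).mem_nhds (half_lt_self hε)
  have hwell {z : Fin 3 → ℝ} (hz : ε / 2 < wsMargin ρ z i j k) : WellSep ρ z i j k :=
    (wellSep_iff_wsMargin_pos hρ).2 (by linarith)
  have h₁ : ∀ᶠ q in 𝓝 p, ε / 2 < wsMargin ρ (update q j (p j)) i j k := by
    have : Tendsto (fun q : Fin 3 → ℝ => update q j (p j)) (𝓝 p) (𝓝 p) :=
      (continuous_id.update j continuous_const).tendsto' p p (update_eq_self j p)
    exact this hW
  have h₂ : ∀ᶠ q in 𝓝 p, ε / 2 < wsMargin ρ (update p j (q j)) i j k := by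
    have : Tendsto (fun q : Fin 3 → ℝ => update p j (q j)) (𝓝 p) (𝓝 p) :=
      (continuous_const.update j (continuous_apply j)).tendsto' p p (update_eq_self j p)
    exact this hW
  have h₃ : ∀ᶠ q in 𝓝 p, dist q p < ε / 2 := Metric.ball_mem_nhds p (half_pos hε)
  filter_upwards [self_mem_nhdsWithin, nhdsWithin_le_nhds (h₁.and (h₂.and h₃))]
    with q hq ⟨hq₁, hq₂, hqp⟩
  constructor
  · intro hpk
    by_contra hqk
    have := wsMargin_le_dist hρ hord hsp happ hij hik hjk hall hp.1 hq hpk hqk (hwell hq₁)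
    rw [dist_comm] at this
    linarith
  · intro hqk
    by_contra hpk
    have := wsMargin_le_dist hρ hord hsp happ hij hik hjk hall hq.1 hp hqk hpk (hwell hq₂)
    linarith

end ThreeAgents

theorem moving_backwards_general (F : (Fin 3 → ℝ) → ℝ × ℝ) (ρ : ℝ) (hρ : 1 ≤ ρ)
    (hord : Ordered F) (hsp : Strategyproof F) (happ : ApproxRatio F ρ)
    (i j k : Fin 3) (hij : i ≠ j) (hik : i ≠ k) (hjk : j ≠ k) (a : ℝ)
    (hall : ∀ z : Fin 3 → ℝ, z i = a → WellSep ρ z i j k →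
      (F z).2 = z j ∨ (F z).2 = z k)
    (x : Fin 3 → ℝ) (hxa : x i = a) (hws : WellSep ρ x i j k)
    (hF : (F x).2 = x k)
    (x' : Fin 3 → ℝ) (hx'a : x' i = a) (hws' : WellSep ρ x' i j k) :
    (F x').2 = x' k := by
  have hρ₀ : 0 ≤ ρ := zero_le_one.trans hρ
  have hall' : ∀ z ∈ wellSepFiber ρ i j k a, (F z).2 = z j ∨ (F z).2 = z k :=
    fun z hz => hall z hz.1 hz.2
  have hconst := convex_wellSepFiber.isPreconnected.induction₂
    (fun p q => (F p).2 = p k ↔ (F q).2 = q k)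
    (fun p hp => eventually_snd_eq_iff hρ₀ hord hsp happ hij hik hjk hall' hp)
    (fun _ _ _ _ _ _ => Iff.trans) (fun _ _ _ _ => Iff.symm)
    (⟨hxa, hws⟩ : x ∈ wellSepFiber ρ i j k a) (⟨hx'a, hws'⟩ : x' ∈ wellSepFiber ρ i j k a)
  exact hconst.mp hF

/-- Claim `moving-backwards`: suppose that for every `(i|j,k)`-well-separated
instance `z` with `z_i = a`, `F₂(z) ∈ {z_j, z_k}`, and that there is an
`(i|j,k)`-well-separated instance `x` with `x_i = a` and `F₂(x) = x_k`.
Then every `(i|j,k)`-well-separated instance `x'` with `x'_i = a` and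
`x_k < x'_k` has `F₂(x') = x'_k`. -/
theorem moving_backwards (F : (Fin 3 → ℝ) → ℝ × ℝ) (ρ : ℝ) (hρ : 1 ≤ ρ)
    (hord : Ordered F) (hsp : Strategyproof F) (happ : ApproxRatio F ρ)
    (i j k : Fin 3) (hij : i ≠ j) (hik : i ≠ k) (hjk : j ≠ k) (a : ℝ)
    (hall : ∀ z : Fin 3 → ℝ, z i = a → WellSep ρ z i j k →
      (F z).2 = z j ∨ (F z).2 = z k)
    (x : Fin 3 → ℝ) (hxa : x i = a) (hws : WellSep ρ x i j k)
    (hF : (F x).2 = x k)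
    (x' : Fin 3 → ℝ) (hx'a : x' i = a) (hws' : WellSep ρ x' i j k)
    (hgt : x k < x' k) :
    (F x').2 = x' k :=
  moving_backwards_general F ρ hρ hord hsp happ i j k hij hik hjk a hall x hxa hws hF x' hx'a hws'
end
end
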